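/- arXiv:0909.0168 — 2 statements merged into one kernel-verified Lean document; each statement's English description precedes it below -/
import Mathlib

section
/- Let n ≥ 1 and let e₁, …, eₙ be integers with |f(e₁, …, eₙ)| ≤ 1. Then there is a tuple (e₁′, …, eₙ′) obtained from (e₁, …, eₙ) by optionally reversing the order and/or optionally negating every entry, such that one of the following holds: (1) e₁′ = 0; (2) e₁′ = 1 and n = 1; (3) e₁′ = 1 and e₂′ ∈ {0, 1, 2, 3}; (4) eᵢ′ = 0 for some i with 1 < i < n and e′_{i−1} · e′_{i+1} ≤ 0; (5) eᵢ′ = 1 for some i with 1 < i < n, e′_{i−1} ∈ {0, 1, 2, 3}, and e′_{i+1} ≥ 0. -/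
/-- `plumbDet n e` is the determinant `f(e_1, ..., e_n)` of the `n x n` tridiagonal matrix whose
diagonal entries are `e 1, ..., e n` (the tuple is indexed starting from `1`) and whose sub- and
super-diagonal entries all equal `1`.  By convention `plumbDet 0 e = 1` and
`plumbDet 1 e = e 1`. -/
def plumbDet (n : ℕ) (e : ℕ → ℤ) : ℤ :=
  Matrix.det (Matrix.of fun i j : Fin n =>
    if (i : ℕ) = (j : ℕ) then e ((i : ℕ) + 1)
    else if (i : ℕ) + 1 = (j : ℕ) ∨ (j : ℕ) + 1 = (i : ℕ) then 1 else 0)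



def P : ℕ → (ℕ → ℤ) → ℤ
  | 0, _ => 1
  | 1, e => e 1
  | n+2, e => e 1 * P (n+1) (fun j => e (j+1)) - P n (fun j => e (j+2))

lemma P_congr : ∀ (n : ℕ) (e f : ℕ → ℤ), (∀ j, 1 ≤ j → j ≤ n → e j = f j) → P n e = P n f
  | 0, _, _, _ => rfl
  | 1, e, f, h => by simpa [P] using h 1 (by norm_num) (by norm_num)
  | n+2, e, f, h => by
      simp only [P]
      rw [h 1 (by omega) (by omega),
        P_congr (n+1) _ _ (fun j h1 h2 => h (j+1) (by omega) (by omega)),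
        P_congr n _ _ (fun j h1 h2 => h (j+2) (by omega) (by omega))]

lemma P_back : ∀ (n : ℕ) (e : ℕ → ℤ), P (n+2) e = e (n+2) * P (n+1) e - P n e
  | 0, e => by simp [P]; ring
  | 1, e => by simp [P]; ring
  | n+2, e => by
      have h1 := P_back (n+1) (fun j => e (j+1))
      have h2 := P_back n (fun j => e (j+2))
      have g1 : P (n+2+2) e = e 1 * P (n+3) (fun j => e (j+1)) - P (n+2) (fun j => e (j+2)) := rfl
      have g2 : P (n+3) e = e 1 * P (n+2) (fun j => e (j+1)) - P (n+1) (fun j => e (j+2)) := rfl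
      have g3 : P (n+2) e = e 1 * P (n+1) (fun j => e (j+1)) - P n (fun j => e (j+2)) := rfl
      rw [g1, h1, h2, g2, g3]
      ring



/-- absorb a zero at position `i` (so `e i = 0`), merging `e (i-1)` and `e (i+1)`. -/
def absorb (e : ℕ → ℤ) (i : ℕ) : ℕ → ℤ := fun j =>
  if j + 2 ≤ i then e j else if j + 1 = i then e (i-1) + e (i+1) else e (j+2)

lemma absorb_lo (e : ℕ → ℤ) (i j : ℕ) (h : j + 2 ≤ i) : absorb e i j = e j := by
  simp [absorb, h]

lemma absorb_mid (e : ℕ → ℤ) (i j : ℕ) (h : j + 1 = i) : absorb e i j = e (i-1) + e (i+1) := by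
  have : ¬ (j + 2 ≤ i) := by omega
  simp [absorb, this, h]

lemma absorb_hi (e : ℕ → ℤ) (i j : ℕ) (h : i ≤ j) : absorb e i j = e (j+2) := by
  have h1 : ¬ (j + 2 ≤ i) := by omega
  have h2 : ¬ (j + 1 = i) := by omega
  simp [absorb, h1, h2]

lemma P_zero_step (a : ℕ) (e : ℕ → ℤ) (h0 : e (a+2) = 0) : P (a+2) e = - P a e := by
  rw [P_back a e, h0]; ring

lemma P_absorb (a : ℕ) (e : ℕ → ℤ) (h0 : e (a+2) = 0) :
    ∀ b, P (a+3+b) e = - P (a+1+b) (absorb e (a+2)) := by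
  have base0 : P (a+3) e = - P (a+1) (absorb e (a+2)) := by
    match a with
    | 0 =>
      have : P 3 e = e 3 * P 2 e - P 1 e := P_back 1 e
      rw [this, P_zero_step 0 e h0]
      have : P 1 (absorb e 2) = absorb e 2 1 := rfl
      rw [this, absorb_mid e 2 1 rfl]
      simp [P]
      ring
    | a+1 =>
      have l1 : P (a+4) e = e (a+4) * P (a+3) e - P (a+2) e := P_back (a+2) e
      have l2 : P (a+3) e = - P (a+1) e := P_zero_step (a+1) e h0
      have l3 : P (a+2) e = e (a+2) * P (a+1) e - P a e := P_back a e
      have r1 : P (a+2) (absorb e (a+3)) =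
          absorb e (a+3) (a+2) * P (a+1) (absorb e (a+3)) - P a (absorb e (a+3)) := P_back a _
      have r2 : absorb e (a+3) (a+2) = e (a+2) + e (a+4) := absorb_mid e (a+3) (a+2) rfl
      have r3 : P (a+1) (absorb e (a+3)) = P (a+1) e := by
        apply P_congr; intro j hj1 hj2; exact absorb_lo e (a+3) j (by omega)
      have r4 : P a (absorb e (a+3)) = P a e := by
        apply P_congr; intro j hj1 hj2; exact absorb_lo e (a+3) j (by omega)
      rw [l1, l2, l3, r1, r2, r3, r4]
      ring
  have base1 : P (a+4) e = - P (a+2) (absorb e (a+2)) := by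
    have l1 : P (a+4) e = e (a+4) * P (a+3) e - P (a+2) e := P_back (a+2) e
    have l2 : P (a+2) e = - P a e := P_zero_step a e h0
    have r1 : P (a+2) (absorb e (a+2)) =
        absorb e (a+2) (a+2) * P (a+1) (absorb e (a+2)) - P a (absorb e (a+2)) := P_back a _
    have r2 : absorb e (a+2) (a+2) = e (a+4) := absorb_hi e (a+2) (a+2) (by omega)
    have r4 : P a (absorb e (a+2)) = P a e := by
      apply P_congr; intro j hj1 hj2; exact absorb_lo e (a+2) j (by omega)
    rw [l1, l2, base0, r1, r2, r4]
    ring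
  intro b
  induction b using Nat.strong_induction_on with
  | _ b IH =>
    match b with
    | 0 => exact base0
    | 1 => exact base1
    | b+2 =>
      have k1 : a+3+(b+2) = (a+3+b)+2 := by omega
      have k2 : a+1+(b+2) = (a+1+b)+2 := by omega
      have l1 := P_back (a+3+b) e
      have r1 := P_back (a+1+b) (absorb e (a+2))
      have r2 : absorb e (a+2) ((a+1+b)+2) = e ((a+3+b)+2) := by
        rw [absorb_hi e (a+2) ((a+1+b)+2) (by omega)]; congr 1; omega
      have k4 : (a+3+b)+1 = a+3+(b+1) := by omega
      have k5 : (a+1+b)+1 = a+1+(b+1) := by omega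
      have i1 : P (a+3+(b+1)) e = - P (a+1+(b+1)) (absorb e (a+2)) := IH (b+1) (by omega)
      have i2 : P (a+3+b) e = - P (a+1+b) (absorb e (a+2)) := IH b (by omega)
      rw [k1, k2, l1, r1, r2, k4, k5, i1, i2]
      ring

def Cl (n : ℕ) (e' : ℕ → ℤ) : Prop :=
  e' 1 = 0 ∨
    (e' 1 = 1 ∧ n = 1) ∨
    (e' 1 = 1 ∧ 2 ≤ n ∧ (e' 2 = 0 ∨ e' 2 = 1 ∨ e' 2 = 2 ∨ e' 2 = 3)) ∨
    (∃ i, 1 < i ∧ i < n ∧ e' i = 0 ∧ e' (i - 1) * e' (i + 1) ≤ 0) ∨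
    (∃ i, 1 < i ∧ i < n ∧ e' i = 1 ∧
      (e' (i - 1) = 0 ∨ e' (i - 1) = 1 ∨ e' (i - 1) = 2 ∨ e' (i - 1) = 3) ∧
      0 ≤ e' (i + 1))

lemma Cl_congr (n : ℕ) (a b : ℕ → ℤ) (hn : 1 ≤ n)
    (h : ∀ j, 1 ≤ j → j ≤ n → a j = b j) (hc : Cl n a) : Cl n b := by
  have h1 : a 1 = b 1 := h 1 le_rfl hn
  rcases hc with c1 | ⟨c1, c2⟩ | ⟨c1, c2, c3⟩ | ⟨k, k1, k2, k3, k4⟩ | ⟨k, k1, k2, k3, k4, k5⟩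
  · exact Or.inl (h1 ▸ c1)
  · exact Or.inr (Or.inl ⟨h1 ▸ c1, c2⟩)
  · refine Or.inr (Or.inr (Or.inl ⟨h1 ▸ c1, c2, ?_⟩))
    rw [← h 2 (by omega) (by omega)]; exact c3
  · refine Or.inr (Or.inr (Or.inr (Or.inl ⟨k, k1, k2, ?_, ?_⟩)))
    · rw [← h k (by omega) (by omega)]; exact k3
    · rw [← h (k-1) (by omega) (by omega), ← h (k+1) (by omega) (by omega)]; exact k4
  · refine Or.inr (Or.inr (Or.inr (Or.inr ⟨k, k1, k2, ?_, ?_, ?_⟩)))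
    · rw [← h k (by omega) (by omega)]; exact k3
    · rw [← h (k-1) (by omega) (by omega)]; exact k4
    · rw [← h (k+1) (by omega) (by omega)]; exact k5

lemma lift (n i : ℕ) (e : ℕ → ℤ) (h2 : 2 ≤ i) (hi : i + 1 ≤ n) (h0 : e i = 0)
    (hs : 0 < e (i-1) * e (i+1)) (h : Cl (n-2) (absorb e i)) : Cl n e := by
  have hab := mul_pos_iff.mp hs
  rcases h with c1 | ⟨c1, cm⟩ | ⟨c1, cm, c2⟩ | ⟨k, k1, k2, k3, k4⟩ | ⟨k, k1, k2, k3, k4, k5⟩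
  · -- head of absorbed = 0
    by_cases hc : i = 2
    · rw [hc] at c1
      rw [absorb_mid e 2 1 rfl] at c1
      subst hc
      rcases hab with ⟨x, y⟩ | ⟨x, y⟩ <;> omega
    · rw [absorb_lo e i 1 (by omega)] at c1
      exact Or.inl c1
  · -- absorbed = [1]
    have hn3 : n = 3 := by omega
    have hi2 : i = 2 := by omega
    subst hi2
    rw [absorb_mid e 2 1 rfl] at c1
    rcases hab with ⟨x, y⟩ | ⟨x, y⟩ <;> omega
  · -- head of absorbed = 1, second ∈ {0,1,2,3}
    rcases (by omega : i = 2 ∨ i = 3 ∨ 4 ≤ i) with hc | hc | hc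
    · subst hc
      rw [absorb_mid e 2 1 rfl] at c1
      rcases hab with ⟨x, y⟩ | ⟨x, y⟩ <;> omega
    · subst hc
      rw [absorb_lo e 3 1 (by omega)] at c1
      rw [absorb_mid e 3 2 rfl] at c2
      simp only [show (3:ℕ)-1 = 2 from rfl] at c2 hab
      rcases hab with ⟨x, y⟩ | ⟨x, y⟩
      · exact Or.inr (Or.inr (Or.inl ⟨c1, by omega, by omega⟩))
      · omega
    · rw [absorb_lo e i 1 (by omega)] at c1
      rw [absorb_lo e i 2 (by omega)] at c2
      exact Or.inr (Or.inr (Or.inl ⟨c1, by omega, c2⟩))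
  · -- interior zero in absorbed, at k
    rcases (by omega : k + 2 < i ∨ k + 2 = i ∨ k + 1 = i ∨ k = i ∨ i < k) with hc | hc | hc | hc | hc
    · rw [absorb_lo e i k (by omega)] at k3
      rw [absorb_lo e i (k-1) (by omega), absorb_lo e i (k+1) (by omega)] at k4
      exact Or.inr (Or.inr (Or.inr (Or.inl ⟨k, k1, by omega, k3, k4⟩)))
    · rw [absorb_lo e i k (by omega)] at k3
      rw [absorb_lo e i (k-1) (by omega), absorb_mid e i (k+1) (by omega)] at k4
      refine Or.inr (Or.inr (Or.inr (Or.inl ⟨k, k1, by omega, k3, ?_⟩)))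
      have hk1 : i - 1 = k + 1 := by omega
      rw [hk1] at k4
      rcases hab with ⟨x, y⟩ | ⟨x, y⟩
      · rw [hk1] at x
        nlinarith
      · rw [hk1] at x
        nlinarith
    · rw [absorb_mid e i k (by omega)] at k3
      rcases hab with ⟨x, y⟩ | ⟨x, y⟩ <;> omega
    · subst hc
      rw [absorb_hi e k k le_rfl] at k3
      rw [absorb_mid e k (k-1) (by omega), absorb_hi e k (k+1) (by omega)] at k4
      refine Or.inr (Or.inr (Or.inr (Or.inl ⟨k+2, by omega, by omega, k3, ?_⟩)))
      have e1 : k + 2 - 1 = k + 1 := by omega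
      have e2 : k + 2 + 1 = k + 3 := by omega
      rw [e1, e2]
      rcases hab with ⟨x, y⟩ | ⟨x, y⟩ <;> nlinarith
    · rw [absorb_hi e i k (by omega)] at k3
      rw [absorb_hi e i (k-1) (by omega), absorb_hi e i (k+1) (by omega)] at k4
      refine Or.inr (Or.inr (Or.inr (Or.inl ⟨k+2, by omega, by omega, k3, ?_⟩)))
      have e1 : k + 2 - 1 = k - 1 + 2 := by omega
      have e2 : k + 2 + 1 = k + 1 + 2 := by omega
      rw [e1, e2]
      exact k4
  · -- interior one in absorbed, at k
    rcases (by omega : k + 2 < i ∨ k + 2 = i ∨ k + 1 = i ∨ k = i ∨ i < k) with hc | hc | hc | hc | hc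
    · rw [absorb_lo e i k (by omega)] at k3
      rw [absorb_lo e i (k-1) (by omega)] at k4
      rw [absorb_lo e i (k+1) (by omega)] at k5
      exact Or.inr (Or.inr (Or.inr (Or.inr ⟨k, k1, by omega, k3, k4, k5⟩)))
    · rw [absorb_lo e i k (by omega)] at k3
      rw [absorb_lo e i (k-1) (by omega)] at k4
      rw [absorb_mid e i (k+1) (by omega)] at k5
      refine Or.inr (Or.inr (Or.inr (Or.inr ⟨k, k1, by omega, k3, k4, ?_⟩)))
      have hk1 : i - 1 = k + 1 := by omega
      rw [hk1] at k5 hab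
      rcases hab with ⟨x, y⟩ | ⟨x, y⟩ <;> omega
    · rw [absorb_mid e i k (by omega)] at k3
      rcases hab with ⟨x, y⟩ | ⟨x, y⟩ <;> omega
    · subst hc
      rw [absorb_hi e k k le_rfl] at k3
      rw [absorb_mid e k (k-1) (by omega)] at k4
      rw [absorb_hi e k (k+1) (by omega)] at k5
      refine Or.inr (Or.inr (Or.inr (Or.inr ⟨k+2, by omega, by omega, k3, ?_, ?_⟩)))
      · have e1 : k + 2 - 1 = k + 1 := by omega
        rw [e1]
        rcases hab with ⟨x, y⟩ | ⟨x, y⟩ <;> omega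
      · have e2 : k + 2 + 1 = k + 3 := by omega
        rw [e2]; exact k5
    · rw [absorb_hi e i k (by omega)] at k3
      rw [absorb_hi e i (k-1) (by omega)] at k4
      rw [absorb_hi e i (k+1) (by omega)] at k5
      refine Or.inr (Or.inr (Or.inr (Or.inr ⟨k+2, by omega, by omega, k3, ?_, ?_⟩)))
      · have e1 : k + 2 - 1 = k - 1 + 2 := by omega
        rw [e1]; exact k4
      · have e2 : k + 2 + 1 = k + 1 + 2 := by omega
        rw [e2]; exact k5


lemma plumbDet_zero (e : ℕ → ℤ) : plumbDet 0 e = 1 := by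
  simp [plumbDet, Matrix.det_fin_zero]

lemma plumbDet_one (e : ℕ → ℤ) : plumbDet 1 e = e 1 := by
  simp [plumbDet, Matrix.det_fin_one]

lemma plumbDet_rec (n : ℕ) (e : ℕ → ℤ) :

    plumbDet (n+2) e = e 1 * plumbDet (n+1) (fun j => e (j+1)) - plumbDet n (fun j => e (j+2)) := by
  rw [plumbDet, Matrix.det_succ_row_zero, Fin.sum_univ_succ, Fin.sum_univ_succ]
  set A := (Matrix.of fun i j : Fin (n+2) =>
    if (i : ℕ) = (j : ℕ) then e ((i : ℕ) + 1)
    else if (i : ℕ) + 1 = (j : ℕ) ∨ (j : ℕ) + 1 = (i : ℕ) then 1 else 0) with hA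
  have hrest : ∑ j : Fin n,
      (-1 : ℤ)^((j.succ.succ : Fin (n+2)) : ℕ) * A 0 j.succ.succ *
        (A.submatrix Fin.succ (j.succ.succ).succAbove).det = 0 := by
    apply Finset.sum_eq_zero
    intro j _
    have : A 0 j.succ.succ = 0 := by
      simp [hA, Fin.val_succ]
    rw [this]; ring
  have hA00 : A 0 0 = e 1 := by simp [hA]
  have hA01 : A 0 ((0 : Fin (n+1)).succ) = 1 := by simp [hA]
  have hM1 : A.submatrix Fin.succ (0 : Fin (n+2)).succAbove =
      Matrix.of (fun i j : Fin (n+1) =>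
        if (i : ℕ) = (j : ℕ) then (fun j => e (j+1)) ((i : ℕ) + 1)
        else if (i : ℕ) + 1 = (j : ℕ) ∨ (j : ℕ) + 1 = (i : ℕ) then 1 else 0) := by
    ext i j
    simp only [Matrix.submatrix_apply, Fin.succAbove_zero, hA, Matrix.of_apply, Fin.val_succ]
    by_cases h1 : (i : ℕ) = (j : ℕ)
    · rw [if_pos (by omega), if_pos h1]
    · rw [if_neg (by omega), if_neg h1]
      by_cases h2 : (i : ℕ) + 1 = (j : ℕ) ∨ (j : ℕ) + 1 = (i : ℕ)
      · rw [if_pos (by omega), if_pos h2]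
      · rw [if_neg (by omega), if_neg h2]
  set B := A.submatrix Fin.succ ((0 : Fin (n+1)).succ).succAbove with hB
  have hsa0 : (((0 : Fin (n+1)).succ).succAbove (0 : Fin (n+1))) = (0 : Fin (n+2)) := by
    rw [Fin.succAbove, if_pos (by simp [Fin.lt_def])]
    rfl
  have hsa : ∀ j : Fin n, ((((0 : Fin (n+1)).succ).succAbove (Fin.succ j)) : ℕ) = (j : ℕ) + 2 := by
    intro j
    rw [Fin.succAbove, if_neg (by simp [Fin.lt_def])]
    simp [Fin.val_succ]
  have hB00 : B 0 0 = 1 := by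
    simp only [hB, Matrix.submatrix_apply, hsa0, hA, Matrix.of_apply]
    norm_num
  have hBrest : ∀ i : Fin n, B i.succ 0 = 0 := by
    intro i
    simp only [hB, Matrix.submatrix_apply, hsa0, hA, Matrix.of_apply]
    simp [Fin.val_succ]
  have hminor : B.submatrix (0 : Fin (n+1)).succAbove Fin.succ =
      Matrix.of (fun i j : Fin n =>
        if (i : ℕ) = (j : ℕ) then (fun j => e (j+2)) ((i : ℕ) + 1)
        else if (i : ℕ) + 1 = (j : ℕ) ∨ (j : ℕ) + 1 = (i : ℕ) then 1 else 0) := by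
    ext i j
    simp only [hB, Matrix.submatrix_apply, Fin.succAbove_zero, hA, Matrix.of_apply, Fin.val_succ]
    rw [show ((((0 : Fin (n+1)).succ).succAbove (Fin.succ j)) : ℕ) = (j : ℕ) + 2 from hsa j]
    by_cases h1 : (i : ℕ) = (j : ℕ)
    · rw [if_pos (by omega), if_pos h1]
    · rw [if_neg (by omega), if_neg h1]
      by_cases h2 : (i : ℕ) + 1 = (j : ℕ) ∨ (j : ℕ) + 1 = (i : ℕ)
      · rw [if_pos (by omega), if_pos h2]
      · rw [if_neg (by omega), if_neg h2]
  have hdetB : B.det = plumbDet n (fun j => e (j+2)) := by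
    rw [Matrix.det_succ_column_zero, Fin.sum_univ_succ, hB00]
    have hz : ∑ i : Fin n,
        (-1 : ℤ)^((i.succ : Fin (n+1)) : ℕ) * B i.succ 0 *
          (B.submatrix (i.succ).succAbove Fin.succ).det = 0 := by
      apply Finset.sum_eq_zero
      intro i _
      rw [hBrest i]; ring
    rw [hz, hminor, plumbDet]
    norm_num
  rw [hrest, hA00, hA01, hM1, hdetB]
  simp only [plumbDet]
  norm_num
  rfl


lemma plumbDet_eq : ∀ (n : ℕ) (e : ℕ → ℤ), plumbDet n e = P n e
  | 0, e => plumbDet_zero e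
  | 1, e => plumbDet_one e
  | n+2, e => by
      rw [plumbDet_rec n e, plumbDet_eq (n+1), plumbDet_eq n]
      rfl



/-- "normal" state: growth plus ratio sign matches last entry sign -/
def NS (u v b : ℤ) : Prop :=
  |u| + 1 ≤ |v| ∧ (1 ≤ b → 0 < u * v) ∧ (b ≤ -1 → u * v < 0) ∧ (4 ≤ |b| → 2 * |u| + 1 ≤ |v|)

/-- "dip" state after a bad `+1` -/
def DS (u v a : ℤ) : Prop :=
  0 < u * v ∧ (a ≤ -1 ∨ (4 ≤ a ∧ |u| + 1 ≤ 2 * |v|))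

/-- "dip" state after a bad `-1` -/
def DmS (u v a : ℤ) : Prop :=
  u * v < 0 ∧ (1 ≤ a ∨ (a ≤ -4 ∧ |u| + 1 ≤ 2 * |v|))

lemma NS_neg2 (u v b : ℤ) (h : NS u v b) : NS (-u) (-v) b := by
  obtain ⟨h1, h2, h3, h4⟩ := h
  refine ⟨by simpa using h1, ?_, ?_, by simpa using h4⟩
  · intro hb; have := h2 hb; nlinarith
  · intro hb; have := h3 hb; nlinarith

lemma DS_neg2 (u v a : ℤ) (h : DS u v a) : DS (-u) (-v) a := by
  obtain ⟨h1, h2⟩ := h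
  exact ⟨by nlinarith, by simpa using h2⟩

lemma DmS_neg2 (u v a : ℤ) (h : DmS u v a) : DmS (-u) (-v) a := by
  obtain ⟨h1, h2⟩ := h
  exact ⟨by nlinarith, by simpa using h2⟩

lemma NS_flip (u v b : ℤ) (h : NS u v b) : NS u (-v) (-b) := by
  obtain ⟨h1, h2, h3, h4⟩ := h
  refine ⟨by simpa using h1, ?_, ?_, by simpa using h4⟩
  · intro hb; have := h3 (by omega); nlinarith
  · intro hb; have := h2 (by omega); nlinarith

lemma DS_flip (u v a : ℤ) (h : DS u v a) : DmS u (-v) (-a) := by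
  obtain ⟨h1, h2⟩ := h
  refine ⟨by nlinarith, ?_⟩
  rcases h2 with h | ⟨h, h'⟩
  · exact Or.inl (by omega)
  · exact Or.inr ⟨by omega, by simpa using h'⟩

lemma DmS_flip (u v a : ℤ) (h : DmS u v a) : DS u (-v) (-a) := by
  obtain ⟨h1, h2⟩ := h
  refine ⟨by nlinarith, ?_⟩
  rcases h2 with h | ⟨h, h'⟩
  · exact Or.inl (by omega)
  · exact Or.inr ⟨by omega, by simpa using h'⟩

lemma coreDS (u v a : ℤ) (hv : 0 < v) (hD : DS u v a) : NS v (a*v-u) a := by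
  obtain ⟨g1, g2⟩ := hD
  have hu : 0 < u := by nlinarith
  have hvv : |v| = v := abs_of_pos hv
  have huu : |u| = u := abs_of_pos hu
  rcases g2 with ha1 | ⟨ha4, hq⟩
  · -- a ≤ -1
    have hav : a * v ≤ -1 * v := mul_le_mul_of_nonneg_right ha1 (le_of_lt hv)
    have hw : a * v - u < 0 := by linarith
    have hww : |a*v-u| = -(a*v-u) := abs_of_neg hw
    refine ⟨by rw [hvv, hww]; linarith, ?_, ?_, ?_⟩
    · intro h; omega
    · intro _; exact mul_neg_of_pos_of_neg hv hw
    · intro h4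
      have ha4 : a ≤ -4 := by rcases abs_cases a with ⟨x, y⟩ | ⟨x, y⟩ <;> omega
      have hav4 : a * v ≤ -4 * v := mul_le_mul_of_nonneg_right ha4 (le_of_lt hv)
      rw [hvv, hww]; linarith
  · -- 4 ≤ a, |u| + 1 ≤ 2|v|
    rw [huu, hvv] at hq
    have hav : 4 * v ≤ a * v := mul_le_mul_of_nonneg_right ha4 (le_of_lt hv)
    have hw : 2 * v + 1 ≤ a * v - u := by linarith
    have hww : |a*v-u| = a*v-u := abs_of_pos (by linarith)
    refine ⟨by rw [hvv, hww]; linarith, ?_, ?_, ?_⟩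
    · intro _; exact mul_pos hv (by linarith)
    · intro h; omega
    · intro _; rw [hvv, hww]; linarith

lemma coreNS (u v b a c : ℤ) (hv : 0 < v) (hb : b ≠ 0) (hN : NS u v b)
    (hcase : 2 ≤ a ∨ (a = 1 ∧ (b ≤ -1 ∨ c ≤ -1 ∨ (4 ≤ b ∧ 4 ≤ c)))) :
    NS v (a*v-u) a ∨ DS v (a*v-u) c ∨ DmS v (a*v-u) c := by
  obtain ⟨h1, h2, h3, h4⟩ := hN
  have hvv : |v| = v := abs_of_pos hv
  have hu1 : |u| ≤ v - 1 := by omega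
  have hu2 : -(v-1) ≤ u ∧ u ≤ v - 1 := abs_le.mp (by omega)
  rcases hcase with ha2 | ⟨ha1, hcc⟩
  · -- 2 ≤ a : stays normal
    left
    have hav : 2 * v ≤ a * v := mul_le_mul_of_nonneg_right ha2 (le_of_lt hv)
    have hw : v + 1 ≤ a * v - u := by linarith
    have hww : |a*v-u| = a*v-u := abs_of_pos (by linarith)
    refine ⟨by rw [hvv, hww]; linarith, ?_, ?_, ?_⟩
    · intro _; exact mul_pos hv (by linarith)
    · intro h; omega
    · intro h4a
      have ha4 : 4 ≤ a := by rcases abs_cases a with ⟨x, y⟩ | ⟨x, y⟩ <;> omega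
      have hav4 : 4 * v ≤ a * v := mul_le_mul_of_nonneg_right ha4 (le_of_lt hv)
      rw [hvv, hww]; linarith
  · -- a = 1
    subst ha1
    rcases (by omega : b ≤ -1 ∨ 1 ≤ b) with hbn | hbp
    · -- previous entry negative: u*v < 0, stays normal
      have huv := h3 hbn
      have hu : u < 0 := by nlinarith
      have hw : v + 1 ≤ 1 * v - u := by linarith
      have hww : |1*v-u| = 1*v-u := abs_of_pos (by linarith)
      left
      refine ⟨by rw [hvv, hww]; omega, ?_, ?_, ?_⟩
      · intro _; exact mul_pos hv (by linarith)
      · intro h; omega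
      · intro h; rw [show |(1:ℤ)| = 1 from rfl] at h; omega
    · -- previous entry positive: dip
      have huv := h2 hbp
      have hu : 0 < u := by nlinarith
      have hw0 : 0 < 1 * v - u := by omega
      have hww : |1*v-u| = 1*v-u := abs_of_pos hw0
      right; left
      refine ⟨mul_pos hv hw0, ?_⟩
      rcases hcc with hc | hc | ⟨hb4, hc4⟩
      · omega
      · exact Or.inl hc
      · refine Or.inr ⟨hc4, ?_⟩
        have := h4 (by rw [abs_of_pos (by omega : (0:ℤ) < b)]; omega)
        rw [hvv, hww]
        rw [abs_of_pos hu] at this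
        omega

/-- transition, assuming v > 0 -/
lemma transPos (u v b a c : ℤ) (hv : 0 < v) (hb : b ≠ 0) (ha : a ≠ 0)
    (hI1 : a = 1 → (b ≤ -1 ∨ c ≤ -1 ∨ (4 ≤ b ∧ 4 ≤ c)))
    (hIm1 : a = -1 → (1 ≤ b ∨ 1 ≤ c ∨ (b ≤ -4 ∧ c ≤ -4)))
    (h : NS u v b ∨ DS u v a ∨ DmS u v a) :
    NS v (a*v-u) a ∨ DS v (a*v-u) c ∨ DmS v (a*v-u) c := by
  rcases h with hN | hD | hDm
  · rcases (by omega : 2 ≤ a ∨ a = 1 ∨ a = -1 ∨ a ≤ -2) with hc | hc | hc | hc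
    · exact coreNS u v b a c hv hb hN (Or.inl hc)
    · exact coreNS u v b a c hv hb hN (Or.inr ⟨hc, hI1 hc⟩)
    · -- a = -1 : negate u,b,a,c keeping v, use coreNS
      have hN' : NS (-u) v (-b) := by simpa using NS_neg2 _ _ _ (NS_flip u v b hN)
      have key := coreNS (-u) v (-b) (-a) (-c) hv (by omega) hN'
        (Or.inr ⟨by omega, by
          rcases hIm1 hc with h | h | ⟨h, h'⟩
          exacts [Or.inl (by omega), Or.inr (Or.inl (by omega)),
            Or.inr (Or.inr ⟨by omega, by omega⟩)]⟩)
      have hw : -a*v - -u = -(a*v-u) := by ring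
      rw [hw] at key
      rcases key with k | k | k
      · exact Or.inl (by simpa using NS_flip _ _ _ k)
      · exact Or.inr (Or.inr (by simpa using DS_flip _ _ _ k))
      · exact Or.inr (Or.inl (by simpa using DmS_flip _ _ _ k))
    · -- a ≤ -2 : same flip
      have hN' : NS (-u) v (-b) := by simpa using NS_neg2 _ _ _ (NS_flip u v b hN)
      have key := coreNS (-u) v (-b) (-a) (-c) hv (by omega) hN' (Or.inl (by omega))
      have hw : -a*v - -u = -(a*v-u) := by ring
      rw [hw] at key
      rcases key with k | k | k
      · exact Or.inl (by simpa using NS_flip _ _ _ k)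
      · exact Or.inr (Or.inr (by simpa using DS_flip _ _ _ k))
      · exact Or.inr (Or.inl (by simpa using DmS_flip _ _ _ k))
  · exact Or.inl (coreDS u v a hv hD)
  · -- DmS: flip
    have hD' : DS (-u) v (-a) := by simpa using DS_neg2 _ _ _ (DmS_flip u v a hDm)
    have key := coreDS (-u) v (-a) hv hD'
    have hw : -a*v - -u = -(a*v-u) := by ring
    rw [hw] at key
    exact Or.inl (by simpa using NS_flip _ _ _ key)

lemma stateV_ne (u v b a : ℤ) (h : NS u v b ∨ DS u v a ∨ DmS u v a) : v ≠ 0 := by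
  rcases h with ⟨h1, _, _, _⟩ | ⟨h1, _⟩ | ⟨h1, _⟩
  · intro hv; rw [hv] at h1; simp at h1; have := abs_nonneg u; omega
  · intro hv; rw [hv, mul_zero] at h1; omega
  · intro hv; rw [hv, mul_zero] at h1; omega

lemma transFull (u v b a c : ℤ) (hb : b ≠ 0) (ha : a ≠ 0)
    (hI1 : a = 1 → (b ≤ -1 ∨ c ≤ -1 ∨ (4 ≤ b ∧ 4 ≤ c)))
    (hIm1 : a = -1 → (1 ≤ b ∨ 1 ≤ c ∨ (b ≤ -4 ∧ c ≤ -4)))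
    (h : NS u v b ∨ DS u v a ∨ DmS u v a) :
    NS v (a*v-u) a ∨ DS v (a*v-u) c ∨ DmS v (a*v-u) c := by
  rcases lt_trichotomy v 0 with hv | hv | hv
  · -- negate both u and v
    have h' : NS (-u) (-v) b ∨ DS (-u) (-v) a ∨ DmS (-u) (-v) a := by
      rcases h with h | h | h
      exacts [Or.inl (NS_neg2 _ _ _ h), Or.inr (Or.inl (DS_neg2 _ _ _ h)),
        Or.inr (Or.inr (DmS_neg2 _ _ _ h))]
    have key := transPos (-u) (-v) b a c (by omega) hb ha hI1 hIm1 h'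
    have hw : a*(-v) - -u = -(a*v-u) := by ring
    rw [hw] at key
    rcases key with k | k | k
    · exact Or.inl (by simpa using NS_neg2 _ _ _ k)
    · exact Or.inr (Or.inl (by simpa using DS_neg2 _ _ _ k))
    · exact Or.inr (Or.inr (by simpa using DmS_neg2 _ _ _ k))
  · exact absurd hv (stateV_ne u v b a h)
  · exact transPos u v b a c hv hb ha hI1 hIm1 h

lemma finalPos (u v b a : ℤ) (hv : 0 < v) (hb : b ≠ 0) (ha : a ≠ 0)
    (hR1 : a = 1 → b ≤ -1 ∨ 4 ≤ b) (hRm1 : a = -1 → 1 ≤ b ∨ b ≤ -4)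
    (h : NS u v b ∨ DS u v a ∨ DmS u v a) : 2 ≤ |a*v - u| := by
  have hvv : |v| = v := abs_of_pos hv
  rcases h with ⟨h1, h2, h3, h4⟩ | ⟨g1, g2⟩ | ⟨g1, g2⟩
  · have hu2 : -(v-1) ≤ u ∧ u ≤ v - 1 := abs_le.mp (by omega)
    rcases (by omega : 2 ≤ a ∨ a = 1 ∨ a = -1 ∨ a ≤ -2) with hc | hc | hc | hc
    · have hav : 2 * v ≤ a * v := mul_le_mul_of_nonneg_right hc (le_of_lt hv)
      rw [abs_of_pos (by linarith : (0:ℤ) < a*v-u)]; linarith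
    · subst hc
      rcases hR1 rfl with hbn | hbp
      · have huv := h3 hbn
        have hu : u < 0 := by nlinarith
        rw [abs_of_pos (by linarith : (0:ℤ) < 1*v-u)]; linarith
      · have huv := h2 (by omega)
        have hu : 0 < u := by nlinarith
        have := h4 (by rw [abs_of_pos (by omega : (0:ℤ) < b)]; omega)
        rw [abs_of_pos hu] at this
        rw [abs_of_pos (by omega : (0:ℤ) < 1*v-u)]; omega
    · subst hc
      rcases hRm1 rfl with hbp | hbn
      · have huv := h2 hbp
        have hu : 0 < u := by nlinarith
        rw [abs_of_neg (by linarith : (-1:ℤ)*v-u < 0)]; linarith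
      · have huv := h3 (by omega)
        have hu : u < 0 := by nlinarith
        have := h4 (by rw [abs_of_neg (by omega : b < 0)]; omega)
        rw [abs_of_neg hu] at this
        rw [abs_of_neg (by omega : (-1:ℤ)*v-u < 0)]; omega
    · have hav : a * v ≤ -2 * v := mul_le_mul_of_nonneg_right hc (le_of_lt hv)
      rw [abs_of_neg (by linarith : a*v-u < 0)]; linarith
  · have hu : 0 < u := by nlinarith
    rcases g2 with hc | ⟨hc, hq⟩
    · have hav : a * v ≤ -1 * v := mul_le_mul_of_nonneg_right hc (le_of_lt hv)
      rw [abs_of_neg (by linarith : a*v-u < 0)]; linarith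
    · rw [abs_of_pos hu, hvv] at hq
      have hav : 4 * v ≤ a * v := mul_le_mul_of_nonneg_right hc (le_of_lt hv)
      rw [abs_of_pos (by linarith : (0:ℤ) < a*v-u)]; linarith
  · have hu : u < 0 := by nlinarith
    rcases g2 with hc | ⟨hc, hq⟩
    · have hav : 1 * v ≤ a * v := mul_le_mul_of_nonneg_right hc (le_of_lt hv)
      rw [abs_of_pos (by linarith : (0:ℤ) < a*v-u)]; linarith
    · rw [abs_of_neg hu, hvv] at hq
      have hav : a * v ≤ -4 * v := mul_le_mul_of_nonneg_right hc (le_of_lt hv)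
      rw [abs_of_neg (by linarith : a*v-u < 0)]; linarith

lemma finalStep (u v b a : ℤ) (hb : b ≠ 0) (ha : a ≠ 0)
    (hR1 : a = 1 → b ≤ -1 ∨ 4 ≤ b) (hRm1 : a = -1 → 1 ≤ b ∨ b ≤ -4)
    (h : NS u v b ∨ DS u v a ∨ DmS u v a) : 2 ≤ |a*v - u| := by
  rcases lt_trichotomy v 0 with hv | hv | hv
  · have h' : NS (-u) (-v) b ∨ DS (-u) (-v) a ∨ DmS (-u) (-v) a := by
      rcases h with h | h | h
      exacts [Or.inl (NS_neg2 _ _ _ h), Or.inr (Or.inl (DS_neg2 _ _ _ h)),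
        Or.inr (Or.inr (DmS_neg2 _ _ _ h))]
    have key := finalPos (-u) (-v) b a (by omega) hb ha hR1 hRm1 h'
    have hw : a*(-v) - -u = -(a*v-u) := by ring
    rw [hw, abs_neg] at key
    exact key
  · exact absurd hv (stateV_ne u v b a h)
  · exact finalPos u v b a hv hb ha hR1 hRm1 h

lemma lemA (n : ℕ) (e : ℕ → ℤ) (hn : 1 ≤ n)
    (hz : ∀ i, 1 ≤ i → i ≤ n → e i ≠ 0)
    (hn1 : n = 1 → e 1 ≤ -2 ∨ 2 ≤ e 1)
    (h1L : e 1 = 1 → 2 ≤ n → e 2 ≤ -1 ∨ 4 ≤ e 2)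
    (hm1L : e 1 = -1 → 2 ≤ n → 1 ≤ e 2 ∨ e 2 ≤ -4)
    (h1R : 2 ≤ n → e n = 1 → e (n-1) ≤ -1 ∨ 4 ≤ e (n-1))
    (hm1R : 2 ≤ n → e n = -1 → 1 ≤ e (n-1) ∨ e (n-1) ≤ -4)
    (hI1 : ∀ i, 1 < i → i < n → e i = 1 →
      e (i-1) ≤ -1 ∨ e (i+1) ≤ -1 ∨ (4 ≤ e (i-1) ∧ 4 ≤ e (i+1)))
    (hIm1 : ∀ i, 1 < i → i < n → e i = -1 →
      1 ≤ e (i-1) ∨ 1 ≤ e (i+1) ∨ (e (i-1) ≤ -4 ∧ e (i+1) ≤ -4)) :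
    2 ≤ |P n e| := by
  rcases (by omega : n = 1 ∨ 2 ≤ n) with h1 | h2
  · subst h1
    have : P 1 e = e 1 := rfl
    rw [this]
    rcases hn1 rfl with h | h
    · rw [abs_of_neg (by omega)]; omega
    · rw [abs_of_pos (by omega)]; omega
  · -- invariant up to n-2
    have inv : ∀ k, k + 2 ≤ n →
        (NS (P k e) (P (k+1) e) (e (k+1)) ∨ DS (P k e) (P (k+1) e) (e (k+2)) ∨
          DmS (P k e) (P (k+1) e) (e (k+2))) := by
      intro k
      induction k with
      | zero =>
        intro _
        simp only [Nat.zero_add, Nat.reduceAdd]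
        have hp0 : P 0 e = 1 := rfl
        have hp1 : P 1 e = e 1 := rfl
        rw [hp0, hp1]
        have he1 := hz 1 (by omega) (by omega)
        rcases (by omega : e 1 = 1 ∨ e 1 = -1 ∨ 2 ≤ e 1 ∨ e 1 ≤ -2) with hc | hc | hc | hc
        · right; left
          refine ⟨by rw [hc]; norm_num, ?_⟩
          rcases h1L hc h2 with h | h
          · exact Or.inl h
          · exact Or.inr ⟨h, by rw [abs_one, hc, abs_one]; omega⟩
        · right; right
          refine ⟨by rw [hc]; norm_num, ?_⟩
          rcases hm1L hc h2 with h | h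
          · exact Or.inl h
          · exact Or.inr ⟨h, by rw [abs_one, hc, abs_neg, abs_one]; omega⟩
        · left
          refine ⟨by rw [abs_one, abs_of_pos (by omega)]; omega, ?_, ?_, ?_⟩
          · intro _; rw [one_mul]; omega
          · intro h; omega
          · intro _; rw [abs_one, abs_of_pos (by omega)]
            rw [abs_of_pos (by omega : (0:ℤ) < e 1)] at *
            omega
        · left
          refine ⟨by rw [abs_one, abs_of_neg (by omega)]; omega, ?_, ?_, ?_⟩
          · intro h; omega
          · intro _; rw [one_mul]; omega
          · intro _; rw [abs_one, abs_of_neg (by omega)]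
            rw [abs_of_neg (by omega : e 1 < 0)] at *
            omega
      | succ k IH =>
        intro hk
        have prev := IH (by omega)
        have hw := P_back k e
        rw [hw]
        have hI1' : e (k+2) = 1 → (e (k+1) ≤ -1 ∨ e (k+3) ≤ -1 ∨ (4 ≤ e (k+1) ∧ 4 ≤ e (k+3))) := by
          intro hh
          have := hI1 (k+2) (by omega) (by omega) hh
          rwa [show k+2-1 = k+1 from by omega, show k+2+1 = k+3 from by omega] at this
        have hIm1' : e (k+2) = -1 → (1 ≤ e (k+1) ∨ 1 ≤ e (k+3) ∨ (e (k+1) ≤ -4 ∧ e (k+3) ≤ -4)) := by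
          intro hh
          have := hIm1 (k+2) (by omega) (by omega) hh
          rwa [show k+2-1 = k+1 from by omega, show k+2+1 = k+3 from by omega] at this
        exact transFull (P k e) (P (k+1) e) (e (k+1)) (e (k+2)) (e (k+3))
          (hz (k+1) (by omega) (by omega)) (hz (k+2) (by omega) (by omega)) hI1' hIm1' prev
    have state := inv (n-2) (by omega)
    rw [show n-2+1 = n-1 from by omega, show n-2+2 = n from by omega] at state
    have hw : P n e = e n * P (n-1) e - P (n-2) e := by
      have := P_back (n-2) e
      rwa [show n-2+2 = n from by omega, show n-2+1 = n-1 from by omega] at this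
    rw [hw]
    exact finalStep (P (n-2) e) (P (n-1) e) (e (n-1)) (e n)
      (hz (n-1) (by omega) (by omega)) (hz n (by omega) (by omega))
      (h1R h2) (hm1R h2) state

lemma absorb_neg (e : ℕ → ℤ) (i : ℕ) :
    absorb (fun t => -e t) i = fun j => -(absorb e i j) := by
  funext j
  simp only [absorb]
  split_ifs <;> ring

lemma rev_absorb (n i : ℕ) (e : ℕ → ℤ) (h2 : 2 ≤ i) (hi : i + 1 ≤ n) :
    ∀ j, 1 ≤ j → j ≤ n - 2 → absorb e i (n-2+1-j) = absorb (fun t => e (n+1-t)) (n+1-i) j := by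
  intro j h1 hjm
  rcases (by omega : j + 2 ≤ n+1-i ∨ j + 1 = n+1-i ∨ n+1-i ≤ j) with hc | hc | hc
  · rw [absorb_lo _ _ _ hc, absorb_hi e i (n-2+1-j) (by omega)]
    congr 1
    omega
  · rw [absorb_mid _ _ _ hc, absorb_mid e i (n-2+1-j) (by omega)]
    rw [show n+1-(n+1-i-1) = i+1 from by omega, show n+1-(n+1-i+1) = i-1 from by omega]
    ring
  · rw [absorb_hi _ _ _ hc, absorb_lo e i (n-2+1-j) (by omega)]
    congr 1
    omega

def GoodVar (n : ℕ) (e : ℕ → ℤ) : Prop :=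
  ∃ e' : ℕ → ℤ,
    ((∀ j, e' j = e j) ∨ (∀ j, e' j = - e j) ∨
      (∀ j, e' j = e (n + 1 - j)) ∨ (∀ j, e' j = - e (n + 1 - j))) ∧ Cl n e'

theorem main_aux : ∀ n : ℕ, ∀ e : ℕ → ℤ, 1 ≤ n → |P n e| ≤ 1 → GoodVar n e := by
  intro n
  induction n using Nat.strong_induction_on with
  | _ n IH =>
  intro e hn hf
  by_contra hG
  have hCe : ¬ Cl n e := fun h => hG ⟨e, Or.inl (fun j => rfl), h⟩
  have hCn : ¬ Cl n (fun j => -e j) := fun h => hG ⟨_, Or.inr (Or.inl fun j => rfl), h⟩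
  have hCr : ¬ Cl n (fun j => e (n+1-j)) :=
    fun h => hG ⟨_, Or.inr (Or.inr (Or.inl fun j => rfl)), h⟩
  have hCnr : ¬ Cl n (fun j => -e (n+1-j)) :=
    fun h => hG ⟨_, Or.inr (Or.inr (Or.inr fun j => rfl)), h⟩
  have he1 : e 1 ≠ 0 := fun h => hCe (Or.inl h)
  have hen : e n ≠ 0 := by
    intro h
    exact hCr (Or.inl (show e (n+1-1) = 0 by rwa [show n+1-1 = n from by omega]))
  -- no zero entries
  have hz : ∀ i, 1 ≤ i → i ≤ n → e i ≠ 0 := by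
    intro i hi1 hi2 hi0
    rcases (by omega : i = 1 ∨ i = n ∨ (1 < i ∧ i < n)) with hc | hc | ⟨hc1, hc2⟩
    · exact he1 (hc ▸ hi0)
    · exact hen (hc ▸ hi0)
    · have hprod : 0 < e (i-1) * e (i+1) := by
        by_contra hp
        exact hCe (Or.inr (Or.inr (Or.inr (Or.inl ⟨i, hc1, hc2, hi0, not_lt.mp hp⟩))))
      have habs := P_absorb (i-2) e (by rwa [show i-2+2 = i from by omega]) (n-1-i)
      rw [show i-2+3+(n-1-i) = n from by omega, show i-2+1+(n-1-i) = n-2 from by omega,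
        show i-2+2 = i from by omega] at habs
      have hfm : |P (n-2) (absorb e i)| ≤ 1 := by
        rw [habs, abs_neg] at hf; exact hf
      obtain ⟨e0, hrel, hcl⟩ := IH (n-2) (by omega) (absorb e i) (by omega) hfm
      have hm1 : 1 ≤ n - 2 := by omega
      rcases hrel with hr | hr | hr | hr
      · have : e0 = absorb e i := funext hr
        subst this
        exact hCe (lift n i e (by omega) (by omega) hi0 hprod hcl)
      · have : e0 = fun j => -(absorb e i j) := funext hr
        subst this
        rw [← absorb_neg] at hcl
        apply hCn
        refine lift n i (fun j => -e j) (by omega) (by omega) (show -e i = 0 by rw [hi0]; ring) ?_ hcl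
        show 0 < -e (i-1) * -e (i+1)
        rw [neg_mul_neg]; exact hprod
      · have : e0 = fun j => absorb e i (n-2+1-j) := funext hr
        subst this
        have hcl2 : Cl (n-2) (absorb (fun t => e (n+1-t)) (n+1-i)) :=
          Cl_congr (n-2) _ _ hm1 (rev_absorb n i e (by omega) (by omega)) hcl
        apply hCr
        refine lift n (n+1-i) (fun t => e (n+1-t)) (by omega) (by omega) ?_ ?_ hcl2
        · show e (n+1-(n+1-i)) = 0
          rwa [show n+1-(n+1-i) = i from by omega]
        · show 0 < e (n+1-(n+1-i-1)) * e (n+1-(n+1-i+1))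
          rw [show n+1-(n+1-i-1) = i+1 from by omega, show n+1-(n+1-i+1) = i-1 from by omega]
          rw [mul_comm]; exact hprod
      · have : e0 = fun j => -(absorb e i (n-2+1-j)) := funext hr
        subst this
        have hcl2 : Cl (n-2) (absorb (fun t => -e (n+1-t)) (n+1-i)) := by
          refine Cl_congr (n-2) _ _ hm1 ?_ hcl
          intro j hj1 hj2
          have := rev_absorb n i e (by omega) (by omega) j hj1 hj2
          have hh : absorb (fun t => -e (n+1-t)) (n+1-i) j
              = -(absorb (fun t => e (n+1-t)) (n+1-i) j) := by
            rw [absorb_neg (fun t => e (n+1-t)) (n+1-i)]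
          rw [hh, ← this]
        apply hCnr
        refine lift n (n+1-i) (fun t => -e (n+1-t)) (by omega) (by omega) ?_ ?_ hcl2
        · show -e (n+1-(n+1-i)) = 0
          rw [show n+1-(n+1-i) = i from by omega, hi0]; ring
        · show 0 < -e (n+1-(n+1-i-1)) * -e (n+1-(n+1-i+1))
          rw [show n+1-(n+1-i-1) = i+1 from by omega, show n+1-(n+1-i+1) = i-1 from by omega]
          rw [neg_mul_neg, mul_comm]; exact hprod
  -- taut facts
  have hn1 : n = 1 → e 1 ≤ -2 ∨ 2 ≤ e 1 := by
    intro h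
    have q1 : e 1 ≠ 1 := fun hx => hCe (Or.inr (Or.inl ⟨hx, h⟩))
    have q2 : -e 1 ≠ 1 := fun hx => hCn (Or.inr (Or.inl ⟨hx, h⟩))
    omega
  have h1L : e 1 = 1 → 2 ≤ n → e 2 ≤ -1 ∨ 4 ≤ e 2 := by
    intro hx h2n
    by_contra hq
    exact hCe (Or.inr (Or.inr (Or.inl ⟨hx, h2n, by omega⟩)))
  have hm1L : e 1 = -1 → 2 ≤ n → 1 ≤ e 2 ∨ e 2 ≤ -4 := by
    intro hx h2n
    by_contra hq
    exact hCn (Or.inr (Or.inr (Or.inl ⟨show -e 1 = 1 by omega, h2n, show -e 2 = 0 ∨ -e 2 = 1 ∨ -e 2 = 2 ∨ -e 2 = 3 by omega⟩)))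
  have h1R : 2 ≤ n → e n = 1 → e (n-1) ≤ -1 ∨ 4 ≤ e (n-1) := by
    intro h2n hx
    by_contra hq
    refine hCr (Or.inr (Or.inr (Or.inl ⟨?_, h2n, ?_⟩)))
    · show e (n+1-1) = 1
      rwa [show n+1-1 = n from by omega]
    · show e (n+1-2) = 0 ∨ e (n+1-2) = 1 ∨ e (n+1-2) = 2 ∨ e (n+1-2) = 3
      rw [show n+1-2 = n-1 from by omega]
      omega
  have hm1R : 2 ≤ n → e n = -1 → 1 ≤ e (n-1) ∨ e (n-1) ≤ -4 := by
    intro h2n hx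
    by_contra hq
    refine hCnr (Or.inr (Or.inr (Or.inl ⟨?_, h2n, ?_⟩)))
    · show -e (n+1-1) = 1
      rw [show n+1-1 = n from by omega]; omega
    · show -e (n+1-2) = 0 ∨ -e (n+1-2) = 1 ∨ -e (n+1-2) = 2 ∨ -e (n+1-2) = 3
      rw [show n+1-2 = n-1 from by omega]
      omega
  have hI1 : ∀ i, 1 < i → i < n → e i = 1 →
      e (i-1) ≤ -1 ∨ e (i+1) ≤ -1 ∨ (4 ≤ e (i-1) ∧ 4 ≤ e (i+1)) := by
    intro i hi1 hi2 hx
    have hA : ¬((e (i-1) = 0 ∨ e (i-1) = 1 ∨ e (i-1) = 2 ∨ e (i-1) = 3) ∧ 0 ≤ e (i+1)) :=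
      fun hh => hCe (Or.inr (Or.inr (Or.inr (Or.inr ⟨i, hi1, hi2, hx, hh.1, hh.2⟩))))
    have hB : ¬((e (i+1) = 0 ∨ e (i+1) = 1 ∨ e (i+1) = 2 ∨ e (i+1) = 3) ∧ 0 ≤ e (i-1)) := by
      intro hh
      refine hCr (Or.inr (Or.inr (Or.inr (Or.inr ⟨n+1-i, by omega, by omega, ?_, ?_, ?_⟩))))
      · show e (n+1-(n+1-i)) = 1
        rwa [show n+1-(n+1-i) = i from by omega]
      · show e (n+1-(n+1-i-1)) = 0 ∨ e (n+1-(n+1-i-1)) = 1 ∨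
          e (n+1-(n+1-i-1)) = 2 ∨ e (n+1-(n+1-i-1)) = 3
        rw [show n+1-(n+1-i-1) = i+1 from by omega]
        exact hh.1
      · show 0 ≤ e (n+1-(n+1-i+1))
        rw [show n+1-(n+1-i+1) = i-1 from by omega]
        exact hh.2
    have hz1 := hz (i-1) (by omega) (by omega)
    have hz2 := hz (i+1) (by omega) (by omega)
    omega
  have hIm1 : ∀ i, 1 < i → i < n → e i = -1 →
      1 ≤ e (i-1) ∨ 1 ≤ e (i+1) ∨ (e (i-1) ≤ -4 ∧ e (i+1) ≤ -4) := by
    intro i hi1 hi2 hx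
    have hA : ¬((-e (i-1) = 0 ∨ -e (i-1) = 1 ∨ -e (i-1) = 2 ∨ -e (i-1) = 3) ∧ 0 ≤ -e (i+1)) :=
      fun hh => hCn (Or.inr (Or.inr (Or.inr (Or.inr
        ⟨i, hi1, hi2, show -e i = 1 by omega, hh.1, hh.2⟩))))
    have hB : ¬((-e (i+1) = 0 ∨ -e (i+1) = 1 ∨ -e (i+1) = 2 ∨ -e (i+1) = 3) ∧ 0 ≤ -e (i-1)) := by
      intro hh
      refine hCnr (Or.inr (Or.inr (Or.inr (Or.inr ⟨n+1-i, by omega, by omega, ?_, ?_, ?_⟩))))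
      · show -e (n+1-(n+1-i)) = 1
        rw [show n+1-(n+1-i) = i from by omega]; omega
      · show -e (n+1-(n+1-i-1)) = 0 ∨ -e (n+1-(n+1-i-1)) = 1 ∨
          -e (n+1-(n+1-i-1)) = 2 ∨ -e (n+1-(n+1-i-1)) = 3
        rw [show n+1-(n+1-i-1) = i+1 from by omega]
        exact hh.1
      · show 0 ≤ -e (n+1-(n+1-i+1))
        rw [show n+1-(n+1-i+1) = i-1 from by omega]
        exact hh.2
    have hz1 := hz (i-1) (by omega) (by omega)
    have hz2 := hz (i+1) (by omega) (by omega)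
    omega
  have := lemA n e hn hz hn1 h1L hm1L h1R hm1R hI1 hIm1
  linarith

/-- Let n ≥ 1 and let e_1, ..., e_n be integers with |f(e_1, ..., e_n)| ≤ 1.  Then there is
a tuple (e_1', ..., e_n') obtained from (e_1, ..., e_n) by optionally reversing the order
and/or optionally negating every entry, such that one of the following holds:
(1) e_1' = 0; (2) e_1' = 1 and n = 1; (3) e_1' = 1 and e_2' in {0,1,2,3};
(4) e_i' = 0 for some 1 < i < n with e'_{i-1} * e'_{i+1} ≤ 0;
(5) e_i' = 1 for some 1 < i < n with e'_{i-1} in {0,1,2,3} and e'_{i+1} ≥ 0. -/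
theorem plumbDet_small_classification (n : ℕ) (hn : 1 ≤ n) (e : ℕ → ℤ)
    (hf : |plumbDet n e| ≤ 1) :
    ∃ e' : ℕ → ℤ,
      ((∀ j, e' j = e j) ∨ (∀ j, e' j = - e j) ∨
        (∀ j, e' j = e (n + 1 - j)) ∨ (∀ j, e' j = - e (n + 1 - j))) ∧
      (e' 1 = 0 ∨
        (e' 1 = 1 ∧ n = 1) ∨
        (e' 1 = 1 ∧ 2 ≤ n ∧ (e' 2 = 0 ∨ e' 2 = 1 ∨ e' 2 = 2 ∨ e' 2 = 3)) ∨
        (∃ i, 1 < i ∧ i < n ∧ e' i = 0 ∧ e' (i - 1) * e' (i + 1) ≤ 0) ∨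
        (∃ i, 1 < i ∧ i < n ∧ e' i = 1 ∧
          (e' (i - 1) = 0 ∨ e' (i - 1) = 1 ∨ e' (i - 1) = 2 ∨ e' (i - 1) = 3) ∧
          0 ≤ e' (i + 1))) := by
  rw [plumbDet_eq] at hf
  obtain ⟨e', hrel, hcl⟩ := main_aux n e hn hf
  exact ⟨e', hrel, hcl⟩
end

section
/- Let n ≥ 1 and let e₁, …, eₙ be integers with |f(e₁, …, eₙ)| ≤ 1. Then one of the following eleven cases holds: (i) n = 1 and e₁ = 0; (ii) n = 1 and |e₁| = 1; (iii) n ≥ 2 and e₁ = 0; (iv) n ≥ 2 and eₙ = 0; (v) there is i with 1 < i < n, eᵢ = 0, and e_{i−1} · e_{i+1} ≤ 0; (vi) n ≥ 2, e₁ = 1, e₂ ≥ 0, and e₂ ≠ 4; (vii) n ≥ 2, eₙ = 1, e_{n−1} ≥ 0, and e_{n−1} ≠ 4; (viii) n ≥ 2, e₁ = −1, e₂ ≤ 0, and e₂ ≠ −4; (ix) n ≥ 2, eₙ = −1, e_{n−1} ≤ 0, and e_{n−1} ≠ −4; (x) there is i with 1 < i < n, eᵢ = 1, e_{i−1} ≥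 0, e_{i+1} ≥ 0, and not (e_{i−1} = 4 and e_{i+1} = 4); (xi) there is i with 1 < i < n, eᵢ = −1, e_{i−1} ≤ 0, e_{i+1} ≤ 0, and not (e_{i−1} = −4 and e_{i+1} = −4). -/
def plumbMatrix (n : ℕ) (e : ℕ → ℤ) : Matrix (Fin n) (Fin n) ℤ :=
  Matrix.of fun i j : Fin n =>
    if (i : ℕ) = (j : ℕ) then e ((i : ℕ) + 1)
    else if (i : ℕ) + 1 = (j : ℕ) ∨ (j : ℕ) + 1 = (i : ℕ) then 1 else 0

lemma plumbDet_eq_det (n : ℕ) (e : ℕ → ℤ) : plumbDet n e = (plumbMatrix n e).det := rfl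

lemma plumbMatrix_apply_eq_zero {n : ℕ} (e : ℕ → ℤ) {i j : Fin n}
    (h : (i : ℕ) + 1 < j ∨ (j : ℕ) + 1 < i) :
    plumbMatrix n e i j = 0 := by
  simp only [plumbMatrix, Matrix.of_apply]; split_ifs <;> omega

lemma plumbMatrix_submatrix {m n : ℕ} (e : ℕ → ℤ) (f g : Fin m → Fin n)
    (hf : ∀ i, (f i : ℕ) = i) (hg : ∀ j, (g j : ℕ) = j) :
    (plumbMatrix n e).submatrix f g = plumbMatrix m e := by
  ext i j; simp [plumbMatrix, hf, hg]

lemma plumbDet_add_two (n : ℕ) (e : ℕ → ℤ) :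
    plumbDet (n + 2) e = e (n + 2) * plumbDet (n + 1) e - plumbDet n e := by
  -- The minor of the off-diagonal `1` in the last row has a single `1` in its last column.
  have hminor : ((plumbMatrix (n + 2) e).submatrix Fin.castSucc
      (Fin.last n).castSucc.succAbove).det = plumbDet n e := by
    rw [Matrix.det_succ_column _ (Fin.last _), Fin.sum_univ_castSucc, Finset.sum_eq_zero,
      Fin.succAbove_last, Matrix.submatrix_submatrix,
      plumbMatrix_submatrix e (Fin.castSucc ∘ Fin.castSucc) _ (fun _ => rfl)
        (fun j => by simp [Fin.succAbove_of_castSucc_lt])]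
    · simp [plumbMatrix, plumbDet_eq_det]
    · intro i _
      rw [Matrix.submatrix_apply, plumbMatrix_apply_eq_zero e (.inl (by simp)), mul_zero, zero_mul]
  rw [plumbDet_eq_det, Matrix.det_succ_row _ (Fin.last _), Fin.sum_univ_castSucc,
    Fin.sum_univ_castSucc, Finset.sum_eq_zero, Fin.succAbove_last, hminor,
    plumbMatrix_submatrix e Fin.castSucc Fin.castSucc (fun _ => rfl) (fun _ => rfl)]
  · simp [plumbMatrix, plumbDet_eq_det]
    ring
  · intro i _
    rw [plumbMatrix_apply_eq_zero e (.inr (by simp)), mul_zero, zero_mul]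

section AbsArith

variable {α : Type*} [Ring α] [LinearOrder α] [IsStrictOrderedRing α] {x y : α}

theorem abs_add_of_mul_nonneg (h : 0 ≤ x * y) : |x + y| = |x| + |y| :=
  (abs_add_eq_add_abs_iff x y).2 (mul_nonneg_iff.1 h)

theorem abs_sub_of_mul_nonneg (h : 0 ≤ x * y) (hyx : |y| ≤ |x|) : |x - y| = |x| - |y| := by
  have hxy : 0 ≤ (x - y) * y := by
    have : y * y ≤ x * y := by
      calc y * y = |y| * |y| := (abs_mul_abs_self y).symm
        _ ≤ |x| * |y| := mul_le_mul_of_nonneg_right hyx (abs_nonneg y)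
        _ = x * y := by rw [← abs_mul, abs_of_nonneg h]
    rw [sub_mul]; exact sub_nonneg.2 this
  have := abs_add_of_mul_nonneg hxy
  rw [sub_add_cancel] at this
  exact eq_sub_of_add_eq this.symm

end AbsArith

theorem mul_pos_of_mul_pos_of_mul_pos {α : Type*} [CommRing α] [LinearOrder α]
    [IsStrictOrderedRing α] {a x y : α} (hx : 0 < a * x) (hy : 0 < a * y) : 0 < x * y := by
  nlinarith [mul_pos hx hy, mul_self_nonneg a]

theorem mul_self_eq_one_of_abs_eq_one {α : Type*} [Ring α] [LinearOrder α] {s : α}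
    (hs : |s| = 1) : s * s = 1 := by
  rw [← abs_mul_abs_self, hs, one_mul]

-- `p / q` plays the role of `fᵢ / fᵢ₋₁` at an entry `a = eᵢ`.
structure Growing (a p q : ℤ) : Prop where
  sign : 0 < a * p * q
  abs_lt : |q| < |p|
  abs_lt_of_four : |a| = 4 → 2 * |q| < |p|

namespace Growing

variable {a b c p q s : ℤ}

theorem ne_zero (h : Growing a p q) : a ≠ 0 := by
  rintro rfl; simpa using h.sign

theorem one_le_abs (h : Growing a p q) : 1 ≤ |q| := by
  have : q ≠ 0 := by rintro rfl; simpa using h.sign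
  exact Int.one_le_abs this

theorem two_le_abs (h : Growing a p q) : 2 ≤ |p| := by
  have := h.one_le_abs; have := h.abs_lt; omega

theorem next_of_two_le_abs (h : Growing a p q) (hb : 2 ≤ |b|) : Growing b (b * p - q) p := by
  have hq := h.one_le_abs
  have hpq := h.abs_lt
  have hlow : |b| * |p| - |q| ≤ |b * p - q| := by
    simpa [abs_mul] using abs_sub_abs_le_abs_sub (b * p) q
  refine ⟨?_, by nlinarith, fun hb4 => by rw [hb4] at hlow; omega⟩
  have hbpq : b * p * q ≤ |b| * |p| * |q| := by
    simpa [abs_mul] using le_abs_self (b * p * q)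
  have hbp : b * p * (b * p) = (|b| * |p|) * (|b| * |p|) := by
    rw [← abs_mul, abs_mul_abs_self]
  have hp := h.two_le_abs
  nlinarith [mul_lt_mul_of_pos_left hpq (show 0 < |b| * |p| by nlinarith)]

theorem next_zero (h : Growing a p q) (hac : 0 < a * c) : Growing c (c * -q - p) (-q) := by
  have hq := h.one_le_abs
  have hpq := h.abs_lt
  have hcpq : 0 < c * (p * q) :=
    mul_pos_of_mul_pos_of_mul_pos hac (by simpa [mul_assoc] using h.sign)
  have hc : 1 ≤ |c| := Int.one_le_abs (by rintro rfl; simp at hac)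
  have habs : |c * -q - p| = |c| * |q| + |p| := by
    rw [sub_eq_add_neg, abs_add_of_mul_nonneg (by nlinarith), abs_mul, abs_neg, abs_neg]
  have hsign : c * (c * -q - p) * -q = c * q * (c * q) + c * (p * q) := by ring
  refine ⟨by rw [hsign]; nlinarith [mul_self_nonneg (c * q)], by rw [abs_neg, habs]; nlinarith,
    fun hc4 => ?_⟩
  rw [abs_neg, habs, hc4]; omega

theorem next_unit_of_mul_neg (h : Growing a p q) (hs : |s| = 1) (hsa : s * a < 0) :
    Growing s (s * p - q) p := by
  have hq := h.one_le_abs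
  have hspq : 0 < -s * (p * q) :=
    mul_pos_of_mul_pos_of_mul_pos (a := a) (by linarith) (by simpa [mul_assoc] using h.sign)
  have habs : |s * p - q| = |p| + |q| := by
    rw [sub_eq_add_neg, abs_add_of_mul_nonneg (by nlinarith), abs_mul, abs_neg, hs, one_mul]
  have hsign : s * (s * p - q) * p = s * s * (p * p) + -s * (p * q) := by ring
  refine ⟨?_, by rw [habs]; omega, fun hs4 => by omega⟩
  rw [hsign, mul_self_eq_one_of_abs_eq_one hs]; nlinarith [mul_self_nonneg p]

-- A `±1` entry with neighbours of its own sign drops the ratio below `1` in absolute value, so it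
-- has to be passed together with the next entry.
theorem unit_shrink (h : Growing a p q) (hs : |s| = 1) (hsa : 0 ≤ s * a) :
    0 < s * (s * p - q) * p ∧ |s * p - q| = |p| - |q| := by
  have hpq := h.abs_lt
  replace hsa : 0 < s * a := hsa.lt_of_ne (mul_ne_zero (by rintro rfl; simp at hs) h.ne_zero).symm
  have hspq : 0 < s * (p * q) :=
    mul_pos_of_mul_pos_of_mul_pos (a := a) (by linarith) (by simpa [mul_assoc] using h.sign)
  have hss := mul_self_eq_one_of_abs_eq_one hs
  have habs : |s * p| = |p| := by rw [abs_mul, hs, one_mul]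
  refine ⟨?_, by rw [abs_sub_of_mul_nonneg (by nlinarith) (by omega), habs]⟩
  have hle : s * (p * q) ≤ |p| * |q| := by simpa [abs_mul, hs] using le_abs_self (s * (p * q))
  have hp : 0 < |p| := by linarith [abs_nonneg q]
  nlinarith [abs_mul_abs_self p, mul_lt_mul_of_pos_left hpq hp]

theorem next_unit_pair (h : Growing a p q) (hs : |s| = 1) (hsa : 0 ≤ s * a)
    (hc : s * c < 0 ∨ a = 4 * s ∧ c = 4 * s) :
    Growing c (c * (s * p - q) - p) (s * p - q) := by
  obtain ⟨hsr, hr⟩ := h.unit_shrink hs hsa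
  have hq := h.one_le_abs
  have hpq := h.abs_lt
  generalize s * p - q = r at hsr hr ⊢
  rcases hc with hc | ⟨rfl, rfl⟩
  · have hcrp : 0 < r * p * -c :=
      mul_pos_of_mul_pos_of_mul_pos (a := s) (by linarith) (by linarith)
    have habs : |c * r - p| = |c| * |r| + |p| := by
      rw [sub_eq_add_neg, abs_add_of_mul_nonneg (by nlinarith), abs_mul, abs_neg]
    have hc1 : 1 ≤ |c| := Int.one_le_abs (by rintro rfl; simp at hc)
    have hsign : c * (c * r - p) * r = c * r * (c * r) + r * p * -c := by ring
    refine ⟨by rw [hsign]; nlinarith [mul_self_nonneg (c * r)], by rw [habs]; nlinarith,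
      fun hc4 => by rw [habs, hc4]; omega⟩
  · have hq2 := h.abs_lt_of_four (by rw [abs_mul, hs]; rfl)
    have habs : |4 * s * r - p| = 4 * |r| - |p| := by
      have h4 : |4 * s * r| = 4 * |r| := by rw [abs_mul, abs_mul, hs]; rfl
      rw [abs_sub_of_mul_nonneg (by nlinarith) (by omega), h4]
    have hss := mul_self_eq_one_of_abs_eq_one hs
    have hsign : 4 * s * (4 * s * r - p) * r = 16 * (s * s) * (r * r) - 4 * (s * r * p) := by
      ring
    have hle : s * r * p ≤ |r| * |p| := by simpa [abs_mul, hs] using le_abs_self (s * r * p)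
    refine ⟨?_, by rw [habs]; omega, fun _ => by rw [habs]; omega⟩
    rw [hsign, hss]
    nlinarith [abs_mul_abs_self r, abs_nonneg r]

theorem two_le_abs_next_unit (h : Growing a p q) (hs : |s| = 1) (ha : s * a < 0 ∨ a = 4 * s) :
    2 ≤ |s * p - q| := by
  rcases ha with ha | rfl
  · exact (h.next_unit_of_mul_neg hs ha).two_le_abs
  · have hq := h.one_le_abs
    have hq2 := h.abs_lt_of_four (by rw [abs_mul, hs]; rfl)
    rw [(h.unit_shrink hs (by nlinarith [mul_self_eq_one_of_abs_eq_one hs])).2]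
    omega

theorem of_two_le_abs (hc : 2 ≤ |c|) : Growing c c 1 :=
  ⟨by nlinarith [abs_mul_abs_self c], by simp; omega, fun hc4 => by simp; omega⟩

theorem of_unit (hs : |s| = 1) (hc : s * c < 0 ∨ c = 4 * s) : Growing c (c * s - 1) s := by
  have hss := mul_self_eq_one_of_abs_eq_one hs
  rcases hc with hc | rfl
  · have habs : |c * s - 1| = |c| + 1 := by
      rw [sub_eq_add_neg, abs_add_of_mul_nonneg (by nlinarith), abs_mul, hs]; simp
    have hc1 : 1 ≤ |c| := Int.one_le_abs (by rintro rfl; simp at hc)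
    have hsign : c * (c * s - 1) * s = c * c * (s * s) - s * c := by ring
    refine ⟨by rw [hsign, hss]; nlinarith [mul_self_nonneg c], by rw [habs, hs]; omega,
      fun hc4 => by rw [habs, hs]; omega⟩
  · have h3 : 4 * s * s - 1 = 3 := by rw [mul_assoc, hss]; rfl
    rw [h3]
    refine ⟨by nlinarith, by rw [hs]; norm_num, fun _ => by rw [hs]; norm_num⟩

end Growing

def GrowsAt (e : ℕ → ℤ) (i : ℕ) : Prop :=
  Growing (e i) (plumbDet i e) (plumbDet (i - 1) e)

theorem growsAt_one {e : ℕ → ℤ} (h : 2 ≤ |e 1|) : GrowsAt e 1 := by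
  rw [GrowsAt, plumbDet_one, Nat.sub_self, plumbDet_zero]
  exact Growing.of_two_le_abs h

theorem growsAt_two {e : ℕ → ℤ} (hs : |e 1| = 1) (hc : 0 ≤ e 1 * e 2 → e 2 = 4 * e 1) :
    GrowsAt e 2 := by
  rw [GrowsAt, plumbDet_add_two 0, plumbDet_one, plumbDet_zero]
  exact Growing.of_unit hs ((lt_or_ge _ _).imp_right hc)

-- The negation of cases (iv), (v), (vii), (ix), (x) and (xi), with `s = ±1` written as `e i`.
structure Admissible (e : ℕ → ℤ) (n : ℕ) : Prop where
  last_ne_zero : 2 ≤ n → e n ≠ 0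
  zero_flanked : ∀ i, 1 < i → i < n → e i = 0 → 0 < e (i - 1) * e (i + 1)
  unit_flanked : ∀ i, 1 < i → i < n → |e i| = 1 → 0 ≤ e i * e (i - 1) → 0 ≤ e i * e (i + 1) →
    e (i - 1) = 4 * e i ∧ e (i + 1) = 4 * e i
  last_unit : 2 ≤ n → |e n| = 1 → 0 ≤ e n * e (n - 1) → e (n - 1) = 4 * e n

namespace Admissible

variable {e : ℕ → ℤ} {n : ℕ}

theorem growsAt_step (he : Admissible e n) {i : ℕ} (hi : 1 ≤ i) (hin : i < n)
    (h : GrowsAt e i) :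
    2 ≤ |plumbDet n e| ∨ GrowsAt e (i + 1) ∨ (i + 2 ≤ n ∧ GrowsAt e (i + 2)) := by
  obtain ⟨k, rfl⟩ : ∃ k, i = k + 1 := ⟨i - 1, by omega⟩
  have hF2 := plumbDet_add_two k e
  have hF3 := plumbDet_add_two (k + 1) e
  simp only [GrowsAt, Nat.add_sub_cancel, add_assoc, Nat.reduceAdd, Nat.reduceSubDiff] at h hF3 ⊢
  rcases eq_or_ne (e (k + 2)) 0 with hb | hb
  · have hk : k + 3 ≤ n := by
      by_contra hk
      exact he.last_ne_zero (by omega) (by rwa [show n = k + 2 by omega])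
    have hac : 0 < e (k + 1) * e (k + 3) := by
      simpa using he.zero_flanked (k + 2) (by omega) (by omega) hb
    refine .inr (.inr ⟨hk, ?_⟩)
    rw [hF3, hF2, hb, zero_mul, zero_sub]
    exact h.next_zero hac
  rcases (Int.one_le_abs hb).eq_or_lt with hs | hb2
  · rcases (show k + 2 = n ∨ k + 3 ≤ n by omega) with rfl | hk
    · refine .inl (hF2 ▸ h.two_le_abs_next_unit hs.symm
        ((lt_or_ge _ _).imp_right fun hba => ?_))
      simpa using he.last_unit (by omega) hs.symm (by simpa using hba)
    rcases lt_or_ge (e (k + 2) * e (k + 1)) 0 with hba | hba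
    · exact .inr (.inl (hF2 ▸ h.next_unit_of_mul_neg hs.symm hba))
    refine .inr (.inr ⟨hk, hF3 ▸ hF2 ▸ h.next_unit_pair hs.symm hba
      ((lt_or_ge _ _).imp_right fun hbc => ?_)⟩)
    simpa using he.unit_flanked (k + 2) (by omega) (by omega) hs.symm (by simpa using hba)
      (by simpa using hbc)
  · exact .inr (.inl (hF2 ▸ h.next_of_two_le_abs hb2))

theorem two_le_abs_plumbDet (he : Admissible e n) {i : ℕ} (hi : 1 ≤ i) (hin : i ≤ n)
    (h : GrowsAt e i) : 2 ≤ |plumbDet n e| := by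
  rcases hin.eq_or_lt with rfl | hlt
  · exact h.two_le_abs
  rcases he.growsAt_step hi hlt h with hdone | hnext | ⟨hle, hnext⟩
  · exact hdone
  · exact he.two_le_abs_plumbDet (by omega) hlt hnext
  · exact he.two_le_abs_plumbDet (by omega) hle hnext
termination_by n - i

end Admissible

/-- Let n ≥ 1 and let e_1, ..., e_n be integers with |f(e_1, ..., e_n)| ≤ 1.  Then one of
the eleven listed cases holds. -/
theorem plumbDet_eleven_cases (n : ℕ) (hn : 1 ≤ n) (e : ℕ → ℤ)
    (hf : |plumbDet n e| ≤ 1) :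
    (n = 1 ∧ e 1 = 0) ∨
    (n = 1 ∧ |e 1| = 1) ∨
    (2 ≤ n ∧ e 1 = 0) ∨
    (2 ≤ n ∧ e n = 0) ∨
    (∃ i, 1 < i ∧ i < n ∧ e i = 0 ∧ e (i - 1) * e (i + 1) ≤ 0) ∨
    (2 ≤ n ∧ e 1 = 1 ∧ 0 ≤ e 2 ∧ e 2 ≠ 4) ∨
    (2 ≤ n ∧ e n = 1 ∧ 0 ≤ e (n - 1) ∧ e (n - 1) ≠ 4) ∨
    (2 ≤ n ∧ e 1 = -1 ∧ e 2 ≤ 0 ∧ e 2 ≠ -4) ∨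
    (2 ≤ n ∧ e n = -1 ∧ e (n - 1) ≤ 0 ∧ e (n - 1) ≠ -4) ∨
    (∃ i, 1 < i ∧ i < n ∧ e i = 1 ∧ 0 ≤ e (i - 1) ∧ 0 ≤ e (i + 1) ∧
      ¬(e (i - 1) = 4 ∧ e (i + 1) = 4)) ∨
    (∃ i, 1 < i ∧ i < n ∧ e i = -1 ∧ e (i - 1) ≤ 0 ∧ e (i + 1) ≤ 0 ∧
      ¬(e (i - 1) = -4 ∧ e (i + 1) = -4)) := by
  by_contra hcon
  push Not at hcon
  obtain ⟨h1, h2, h3, h4, h5, h6, h7, h8, h9, h10, h11⟩ := hcon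
  have hadm : Admissible e n := by
    refine ⟨h4, h5, fun i hi hin hs => ?_, fun hn2 hs => ?_⟩ <;>
    rcases (abs_eq zero_le_one).1 hs with h | h <;> rw [h] <;>
    simp only [one_mul, mul_one, neg_one_mul, neg_nonneg, mul_neg]
    exacts [h10 i hi hin h, h11 i hi hin h, h7 hn2 h, h9 hn2 h]
  have he1 : e 1 ≠ 0 := by
    rcases hn.eq_or_lt with h | h
    exacts [h1 h.symm, h3 h]
  have key : 2 ≤ |plumbDet n e| := by
    rcases (Int.one_le_abs he1).eq_or_lt with hs | hbig
    · have hn2 : 2 ≤ n := by by_contra; exact h2 (by omega) hs.symm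
      refine hadm.two_le_abs_plumbDet (by norm_num) hn2 (growsAt_two hs.symm ?_)
      rcases (abs_eq zero_le_one).1 hs.symm with h | h <;> rw [h] <;>
      simp only [one_mul, mul_one, neg_one_mul, neg_nonneg, mul_neg]
      exacts [h6 hn2 h, h8 hn2 h]
    · exact hadm.two_le_abs_plumbDet le_rfl hn (growsAt_one hbig)
  omega
end
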